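/- arXiv:2002.12493 — 5 statements merged into one kernel-verified Lean document; each statement's English description precedes it below -/
import Mathlib

section
/- Let A ∈ ℝ^{m×m} and B : ℕ → ℝ^{m×m} with A + B(t) invertible for all t. Suppose ‖A^k‖ ≤ C·exp(−α k) for all k ≥ 0, with C ≥ 1 and α > 0. Then any solution of x(t+1) = (A + B(t)) x(t) satisfies |x(t)| ≤ C·|x(0)|·exp(−α t + C·exp(α)·∑_{τ=0}^{t−1} ‖B(τ)‖) for all t ∈ ℕ. -/
/-!
Variation of constants writes `x t` as `A^t x₀` plus the propagated perturbations
`A^(t-1-τ) B τ x τ`. Weighting by `e^{α t}` absorbs the decay of `A^k`, so that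
`u t = e^{α t} ‖x t‖` satisfies the summatory Grönwall inequality
`u t ≤ C ‖x₀‖ + ∑_{τ<t} C e^α ‖B τ‖ u τ`, whence `u t ≤ C ‖x₀‖ exp (C e^α ∑_{τ<t} ‖B τ‖)`.
-/

open Finset Real

/-- The partial sums `c + ∑_{k<n} b k u k` dominate `u` and grow by at most the factor `1 + b n`
per step, which reduces this to the recursive form `discrete_gronwall`. -/
theorem le_mul_exp_sum_of_le_add_sum {u b : ℕ → ℝ} {c : ℝ} (hc : 0 ≤ c) (hb : ∀ n, 0 ≤ b n)
    (hu : ∀ n, u n ≤ c + ∑ k ∈ range n, b k * u k) (n : ℕ) :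
    u n ≤ c * exp (∑ k ∈ range n, b k) := by
  let S (n : ℕ) : ℝ := c + ∑ k ∈ range n, b k * u k
  have hS : ∀ n ≥ 0, S (n + 1) ≤ (1 + b n) * S n + 0 := fun n _ ↦ by
    have := mul_le_mul_of_nonneg_left (hu n) (hb n)
    simp only [S, sum_range_succ]
    linarith
  have := discrete_gronwall (n₀ := 0) (by simpa [S] using hc) hS (fun n _ ↦ hb n)
    (fun _ _ ↦ le_rfl) (Nat.zero_le n)
  simp only [S, range_zero, sum_empty, sum_const_zero, add_zero, ← range_eq_Ico] at this
  exact (hu n).trans this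

section Perturbation

variable {𝕜 E : Type*} [NontriviallyNormedField 𝕜] [SeminormedAddCommGroup E] [NormedSpace 𝕜 E]
  {A : E →L[𝕜] E} {B : ℕ → E →L[𝕜] E} {x : ℕ → E}

theorem eq_pow_apply_add_sum_of_succ_eq (hx : ∀ t, x (t + 1) = (A + B t) (x t)) (t : ℕ) :
    x t = (A ^ t) (x 0) + ∑ τ ∈ range t, (A ^ (t - 1 - τ)) (B τ (x τ)) := by
  induction t with
  | zero => simp
  | succ n ih =>
    have hA : A (x n) = (A ^ (n + 1)) (x 0) + ∑ τ ∈ range n, (A ^ (n - τ)) (B τ (x τ)) := by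
      rw [ih, map_add, map_sum, pow_succ']
      congr 1
      refine sum_congr rfl fun τ hτ ↦ ?_
      rw [show n - τ = n - 1 - τ + 1 by grind, pow_succ']
      rfl
    rw [hx, add_apply, hA, sum_range_succ]
    simp [add_assoc]

theorem norm_le_norm_pow_mul_add_sum (hx : ∀ t, x (t + 1) = (A + B t) (x t)) (t : ℕ) :
    ‖x t‖ ≤ ‖A ^ t‖ * ‖x 0‖ + ∑ τ ∈ range t, ‖A ^ (t - 1 - τ)‖ * (‖B τ‖ * ‖x τ‖) := by
  rw [eq_pow_apply_add_sum_of_succ_eq hx t]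
  refine (norm_add_le _ _).trans (add_le_add ((A ^ t).le_opNorm _) ?_)
  refine (norm_sum_le _ _).trans (sum_le_sum fun τ _ ↦ ?_)
  exact ((A ^ _).le_opNorm _).trans (by gcongr; exact (B τ).le_opNorm _)

variable {C α : ℝ}

theorem norm_pow_mul_exp_add_le (hA : ∀ k : ℕ, ‖A ^ k‖ ≤ C * exp (-α * k)) (k : ℕ) (s : ℝ) :
    ‖A ^ k‖ * exp (α * (k + s)) ≤ C * exp (α * s) := by
  calc ‖A ^ k‖ * exp (α * (k + s)) ≤ C * exp (-α * k) * exp (α * (k + s)) := by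
        gcongr; exact hA k
    _ = C * exp (α * s) := by rw [mul_assoc, ← exp_add]; ring_nf

theorem exp_mul_norm_le_add_sum (hx : ∀ t, x (t + 1) = (A + B t) (x t))
    (hA : ∀ k : ℕ, ‖A ^ k‖ ≤ C * exp (-α * k)) (t : ℕ) :
    exp (α * t) * ‖x t‖ ≤
      C * ‖x 0‖ + ∑ τ ∈ range t, C * exp α * ‖B τ‖ * (exp (α * τ) * ‖x τ‖) := by
  have hfirst : exp (α * t) * (‖A ^ t‖ * ‖x 0‖) ≤ C * ‖x 0‖ := by
    have := norm_pow_mul_exp_add_le hA t 0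
    simp only [add_zero, mul_zero, exp_zero, mul_one] at this
    nlinarith [norm_nonneg (x 0)]
  have hterm : ∀ τ ∈ range t, exp (α * t) * (‖A ^ (t - 1 - τ)‖ * (‖B τ‖ * ‖x τ‖)) ≤
      C * exp α * ‖B τ‖ * (exp (α * τ) * ‖x τ‖) := fun τ hτ ↦ by
    have ht : (t : ℝ) = ((t - 1 - τ : ℕ) : ℝ) + (τ + 1) := by
      rw [Nat.cast_sub (by grind), Nat.cast_sub (by grind)]; push_cast; ring
    have := norm_pow_mul_exp_add_le hA (t - 1 - τ) (τ + 1)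
    rw [← ht, mul_add, mul_one, exp_add] at this
    calc exp (α * t) * (‖A ^ (t - 1 - τ)‖ * (‖B τ‖ * ‖x τ‖))
        = ‖A ^ (t - 1 - τ)‖ * exp (α * t) * (‖B τ‖ * ‖x τ‖) := by ring
      _ ≤ C * (exp (α * τ) * exp α) * (‖B τ‖ * ‖x τ‖) := by gcongr
      _ = _ := by ring
  calc exp (α * t) * ‖x t‖
      ≤ exp (α * t) * (‖A ^ t‖ * ‖x 0‖ +
          ∑ τ ∈ range t, ‖A ^ (t - 1 - τ)‖ * (‖B τ‖ * ‖x τ‖)) := by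
        gcongr; exact norm_le_norm_pow_mul_add_sum hx t
    _ ≤ _ := by
        rw [mul_add, mul_sum]
        exact add_le_add hfirst (sum_le_sum hterm)

end Perturbation

theorem stmt_1_general (m : ℕ)
    (A : EuclideanSpace ℝ (Fin m) →L[ℝ] EuclideanSpace ℝ (Fin m))
    (B : ℕ → (EuclideanSpace ℝ (Fin m) →L[ℝ] EuclideanSpace ℝ (Fin m)))
    (C α : ℝ)
    (hA : ∀ k : ℕ, ‖A ^ k‖ ≤ C * Real.exp (-α * k))
    (x : ℕ → EuclideanSpace ℝ (Fin m))
    (hx : ∀ t : ℕ, x (t + 1) = (A + B t) (x t)) :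
    ∀ t : ℕ,
      ‖x t‖ ≤ C * ‖x 0‖ *
        Real.exp (-α * t + C * Real.exp α * ∑ τ ∈ Finset.range t, ‖B τ‖) := by
  intro t
  have hC : 0 ≤ C := (norm_nonneg _).trans (by simpa using hA 0)
  have hu := le_mul_exp_sum_of_le_add_sum (u := fun t ↦ exp (α * t) * ‖x t‖)
    (mul_nonneg hC (norm_nonneg _)) (fun τ ↦ by positivity) (exp_mul_norm_le_add_sum hx hA) t
  rw [← mul_sum] at hu
  calc ‖x t‖ = exp (-α * t) * (exp (α * t) * ‖x t‖) := by
        rw [← mul_assoc, ← exp_add]; simp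
    _ ≤ exp (-α * t) * (C * ‖x 0‖ * exp (C * exp α * ∑ τ ∈ range t, ‖B τ‖)) := by gcongr
    _ = _ := by rw [exp_add]; ring

/-- Discrete-time Grönwall comparison (Lemma A.1, discrete case):
if `‖A^k‖ ≤ C exp(−α k)` and `A + B t` is invertible for every `t`, then solutions of
`x (t+1) = (A + B t) (x t)` satisfy
`‖x t‖ ≤ C ‖x 0‖ exp(−α t + C e^α ∑_{τ<t} ‖B τ‖)`. -/
theorem stmt_1 (m : ℕ)
    (A : EuclideanSpace ℝ (Fin m) →L[ℝ] EuclideanSpace ℝ (Fin m))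
    (B : ℕ → (EuclideanSpace ℝ (Fin m) →L[ℝ] EuclideanSpace ℝ (Fin m)))
    (hinv : ∀ t : ℕ, IsUnit (A + B t))
    (C α : ℝ) (hC : 1 ≤ C) (hα : 0 < α)
    (hA : ∀ k : ℕ, ‖A ^ k‖ ≤ C * Real.exp (-α * k))
    (x : ℕ → EuclideanSpace ℝ (Fin m))
    (hx : ∀ t : ℕ, x (t + 1) = (A + B t) (x t)) :
    ∀ t : ℕ,
      ‖x t‖ ≤ C * ‖x 0‖ *
        Real.exp (-α * t + C * Real.exp α * ∑ τ ∈ Finset.range t, ‖B τ‖) :=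
  stmt_1_general m A B C α hA x hx
end

section
/- Fix κ ≥ 1 and consider, for each h ∈ [1/κ, 1], the quadratic λ² + 2dλ + h = 0 with damping parameter d > 0. Define the worst-case decay rate r(d) := max over h ∈ [1/κ,1] of the largest real part of the two roots. Then r(d) is minimized at d = 1/√κ, with minimal value r(1/√κ) = −1/√κ. -/
/-!
Completing the square, a root `z` of `z² + 2dz + h` satisfies `(z + d)² = d² − h`, so
`Re z = −d` when `d² ≤ h` and `Re z = −d ± √(d² − h)` otherwise. At `d = 1/√κ` every
`h ∈ [1/κ, 1]` is in the first case, so the worst-case rate is `−1/√κ`. For any other `d`,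
the single instance `h = 1/κ` already has a root with real part `−d + √(d² − 1/κ) ≥ −1/√κ`.
-/

open Real

/-- `sSup (rootReSet κ d)` is the worst-case decay rate `r d`. -/
def rootReSet (κ d : ℝ) : Set ℝ :=
  {x : ℝ | ∃ (z : ℂ) (h : ℝ), 1 / κ ≤ h ∧ h ≤ 1 ∧ z ^ 2 + 2 * d * z + h = 0 ∧ x = z.re}

section Roots

variable {d h : ℝ} {z : ℂ}

lemma re_im_of_root (hz : z ^ 2 + 2 * d * z + h = 0) :
    (z.re + d) ^ 2 - z.im ^ 2 = d ^ 2 - h ∧ (z.re + d) * z.im = 0 := by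
  have hsq : (z + d) ^ 2 = ((d ^ 2 - h : ℝ) : ℂ) := by
    push_cast
    linear_combination hz
  have hre := congrArg Complex.re hsq
  have him := congrArg Complex.im hsq
  simp only [sq, Complex.mul_re, Complex.mul_im, Complex.add_re, Complex.add_im,
    Complex.ofReal_re, Complex.ofReal_im, add_zero] at hre him
  constructor <;> linarith

lemma re_eq_neg_of_root_of_sq_le (hdh : d ^ 2 ≤ h) (hz : z ^ 2 + 2 * d * z + h = 0) :
    z.re = -d := by
  obtain ⟨hsq, hprod⟩ := re_im_of_root hz
  rcases mul_eq_zero.1 hprod with hre | him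
  · linarith
  · rw [him] at hsq
    nlinarith [sq_nonneg (z.re + d)]

lemma sq_re_add_le_of_root (hh : 0 ≤ h) (hz : z ^ 2 + 2 * d * z + h = 0) :
    (z.re + d) ^ 2 ≤ d ^ 2 := by
  obtain ⟨hsq, hprod⟩ := re_im_of_root hz
  rcases mul_eq_zero.1 hprod with hre | him
  · simpa [hre] using sq_nonneg d
  · rw [him] at hsq
    linarith

/-- `Real.sqrt` vanishes on negative arguments, so this covers both the real and the complex case. -/
lemma exists_root_re_eq (d h : ℝ) :
    ∃ z : ℂ, z ^ 2 + 2 * d * z + h = 0 ∧ z.re = -d + √(d ^ 2 - h) := by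
  set a := √(d ^ 2 - h)
  set b := √(h - d ^ 2)
  have hab : a ^ 2 - b ^ 2 = d ^ 2 - h ∧ a * b = 0 := by
    rcases le_total (d ^ 2) h with hle | hle
    · have ha : a = 0 := Real.sqrt_eq_zero'.2 (by linarith)
      simp [ha, b, Real.sq_sqrt (sub_nonneg.2 hle)]
    · have hb : b = 0 := Real.sqrt_eq_zero'.2 (by linarith)
      simp [hb, a, Real.sq_sqrt (sub_nonneg.2 hle)]
  refine ⟨⟨-d + a, b⟩, ?_, rfl⟩
  apply Complex.ext <;>
    simp only [sq, Complex.add_re, Complex.add_im, Complex.mul_re, Complex.mul_im,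
      Complex.ofReal_re, Complex.ofReal_im, Complex.re_ofNat, Complex.im_ofNat,
      Complex.zero_re, Complex.zero_im] <;>
    nlinarith [hab.1, hab.2]

end Roots

lemma neg_le_neg_add_sqrt_sq_sub_sq {s : ℝ} (hs : 0 ≤ s) (d : ℝ) :
    -s ≤ -d + √(d ^ 2 - s ^ 2) := by
  rcases le_total d s with hds | hsd
  · linarith [Real.sqrt_nonneg (d ^ 2 - s ^ 2)]
  · have : d - s ≤ √(d ^ 2 - s ^ 2) :=
      (Real.le_sqrt (sub_nonneg.2 hsd) (by nlinarith)).2 (by nlinarith)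
    linarith

section RootReSet

variable {κ : ℝ}

lemma rootReSet_bddAbove (hκ : 0 < κ) (d : ℝ) : BddAbove (rootReSet κ d) := by
  refine ⟨|d| - d, ?_⟩
  rintro x ⟨z, h, hκh, -, hz, rfl⟩
  have hsq := sq_re_add_le_of_root (le_trans (by positivity) hκh) hz
  have := abs_le_of_sq_le_sq (a := z.re + d) (by rwa [sq_abs]) (abs_nonneg d)
  linarith [le_abs_self (z.re + d)]

lemma exists_mem_rootReSet (hκ : 1 ≤ κ) (d : ℝ) :
    -d + √(d ^ 2 - 1 / κ) ∈ rootReSet κ d := by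
  obtain ⟨z, hz, hre⟩ := exists_root_re_eq d (1 / κ)
  exact ⟨z, 1 / κ, le_rfl, div_le_one_of_le₀ hκ (by linarith), by exact_mod_cast hz, hre.symm⟩

lemma rootReSet_eq_singleton (hκ : 1 ≤ κ) {d : ℝ} (hd : d ^ 2 ≤ 1 / κ) :
    rootReSet κ d = {-d} := by
  refine Set.eq_singleton_iff_unique_mem.2 ⟨?_, ?_⟩
  · have := exists_mem_rootReSet hκ d
    rwa [Real.sqrt_eq_zero'.2 (sub_nonpos.2 hd), add_zero] at this
  · rintro x ⟨z, h, hκh, -, hz, rfl⟩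
    exact re_eq_neg_of_root_of_sq_le (hd.trans hκh) hz

lemma neg_inv_sqrt_le_sSup_rootReSet (hκ : 1 ≤ κ) (d : ℝ) :
    -(1 / √κ) ≤ sSup (rootReSet κ d) := by
  have hκ0 : 0 < κ := by linarith
  have hsq : (1 / √κ) ^ 2 = 1 / κ := by rw [div_pow, one_pow, Real.sq_sqrt hκ0.le]
  calc -(1 / √κ) ≤ -d + √(d ^ 2 - (1 / √κ) ^ 2) :=
        neg_le_neg_add_sqrt_sq_sub_sq (by positivity) d
    _ ≤ sSup (rootReSet κ d) :=
        le_csSup (rootReSet_bddAbove hκ0 d) (hsq ▸ exists_mem_rootReSet hκ d)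

end RootReSet

/-- Optimal damping for the continuous-time heavy-ball method: with
`r d = sup { Re λ : λ² + 2dλ + h = 0, h ∈ [1/κ, 1] }` the worst-case decay rate,
`r` is minimized over `d > 0` at `d = 1/√κ`, with minimal value `−1/√κ`. -/
theorem stmt_4 (κ : ℝ) (hκ : 1 ≤ κ) (r : ℝ → ℝ)
    (hr : ∀ d : ℝ, r d = sSup {x : ℝ | ∃ (z : ℂ) (h : ℝ),
      1 / κ ≤ h ∧ h ≤ 1 ∧ z ^ 2 + 2 * d * z + h = 0 ∧ x = z.re}) :
    r (1 / Real.sqrt κ) = -(1 / Real.sqrt κ) ∧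
      ∀ d : ℝ, 0 < d → r (1 / Real.sqrt κ) ≤ r d := by
  have hsq : (1 / √κ) ^ 2 = 1 / κ := by
    rw [div_pow, one_pow, Real.sq_sqrt (by linarith)]
  have hopt : r (1 / √κ) = -(1 / √κ) := by
    rw [hr, ← rootReSet, rootReSet_eq_singleton hκ hsq.le, csSup_singleton]
  refine ⟨hopt, fun d _ => ?_⟩
  rw [hopt, hr, ← rootReSet]
  exact neg_inv_sqrt_le_sSup_rootReSet hκ d
end

section
/- For d > 1/√κ with κ > 1, the worst-case decay rate −d + √(d² − 1/κ) satisfies −d + √(d² − 1/κ) ≥ −1/(2dκ) · (1/(1 − 1/(2d²κ))) ; in particular, for any fixed c > 0 and d = c (independent of κ), the decay rate −d + √(d² − 1/κ) is bounded below by −1/(dκ), so it scales like −Θ(1/κ) as κ → ∞ rather than −Θ(1/√κ). -/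
/-!
With `x = 1/(d²κ) ∈ (0, 1]` the rate is `-d + d √(1 - x)`, and the bound is `-d x/(2 - x)`.
Both reduce to `√(1 - x) ≥ 2(1 - x)/(2 - x)`, which after squaring is `(2 - x)² - 4(1 - x) = x² ≥ 0`;
the cruder bound `-d x = -1/(dκ)` follows from `2 - x ≥ 1`.
-/

lemma one_sub_div_two_sub_le_sqrt_one_sub {x : ℝ} (hx : x ≤ 1) :
    1 - x / (2 - x) ≤ √(1 - x) := by
  have h2x : 0 < 2 - x := by linarith
  rw [show 1 - x / (2 - x) = 2 * (1 - x) / (2 - x) by field_simp; ring,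
    Real.le_sqrt (by positivity) (by linarith), div_pow, div_le_iff₀ (by positivity)]
  nlinarith [sq_nonneg x]

lemma sqrt_sq_sub_one_div_eq {d κ : ℝ} (hd : 0 < d) (hκ : 0 < κ) :
    √(d ^ 2 - 1 / κ) = d * √(1 - 1 / (d ^ 2 * κ)) := by
  rw [← Real.sqrt_sq hd.le, ← Real.sqrt_mul (sq_nonneg d), Real.sqrt_sq hd.le]
  congr 1
  field_simp

lemma neg_add_sqrt_sq_sub_one_div_ge {d κ : ℝ} (hd : 0 < d) (hκ : 0 < κ) (hdκ : 1 ≤ d ^ 2 * κ) :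
    -(1 / (2 * d * κ)) * (1 / (1 - 1 / (2 * d ^ 2 * κ))) ≤ -d + √(d ^ 2 - 1 / κ) := by
  set x := 1 / (d ^ 2 * κ) with hx_def
  have hx : x ≤ 1 := by rw [hx_def, div_le_one (by positivity)]; exact hdκ
  have hlhs : -(1 / (2 * d * κ)) * (1 / (1 - 1 / (2 * d ^ 2 * κ))) =
      -d + d * (1 - x / (2 - x)) := by
    rw [hx_def]; field_simp; ring
  rw [hlhs, sqrt_sq_sub_one_div_eq hd hκ]
  gcongr
  exact one_sub_div_two_sub_le_sqrt_one_sub hx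

lemma neg_one_div_mul_le_neg_one_div_two_mul_mul {d κ : ℝ} (hd : 0 < d) (hκ : 0 < κ)
    (hdκ : 1 ≤ d ^ 2 * κ) :
    -(1 / (d * κ)) ≤ -(1 / (2 * d * κ)) * (1 / (1 - 1 / (2 * d ^ 2 * κ))) := by
  have h : 1 / (2 * d * κ) * (1 / (1 - 1 / (2 * d ^ 2 * κ))) =
      1 / (d * κ) * (d ^ 2 * κ / (2 * (d ^ 2 * κ) - 1)) := by
    field_simp
  rw [neg_mul, neg_le_neg_iff, h]
  apply mul_le_of_le_one_right (by positivity)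
  rw [div_le_one (by linarith)]
  linarith

lemma one_lt_sq_mul_of_one_div_sqrt_lt {d κ : ℝ} (hκ : 0 < κ) (hd : 1 / √κ < d) :
    1 < d ^ 2 * κ := by
  have h : 1 < d * √κ := by rwa [div_lt_iff₀ (Real.sqrt_pos.2 hκ)] at hd
  calc 1 < (d * √κ) ^ 2 := one_lt_pow₀ h two_ne_zero
    _ = d ^ 2 * κ := by rw [mul_pow, Real.sq_sqrt hκ.le]

/-- Overdamping destroys acceleration: for `κ > 1` and `d > 1/√κ`, the worst-case decay
rate `−d + √(d² − 1/κ)` satisfies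
`−d + √(d² − 1/κ) ≥ −1/(2dκ) · 1/(1 − 1/(2d²κ))`, and it is bounded below by `−1/(dκ)`,
so it scales like `−Θ(1/κ)` rather than `−Θ(1/√κ)`. -/
theorem stmt_5 (κ d : ℝ) (hκ : 1 < κ) (hd : 1 / Real.sqrt κ < d) :
    (-d + Real.sqrt (d ^ 2 - 1 / κ) ≥
      -(1 / (2 * d * κ)) * (1 / (1 - 1 / (2 * d ^ 2 * κ)))) ∧
    (-d + Real.sqrt (d ^ 2 - 1 / κ) ≥ -(1 / (d * κ))) := by
  have hκ0 : 0 < κ := by linarith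
  have hd0 : 0 < d := lt_trans (by positivity) hd
  have hdκ := (one_lt_sq_mul_of_one_div_sqrt_lt hκ0 hd).le
  have h := neg_add_sqrt_sq_sub_one_div_ge hd0 hκ0 hdκ
  exact ⟨h, (neg_one_div_mul_le_neg_one_div_two_mul_mul hd0 hκ0 hdκ).trans h⟩
end

section
/- Let f : ℝⁿ → ℝ be twice continuously differentiable, and consider the dynamics q̇ = p, ṗ = −∇f(q) − 2dp − (∇f(q + βp) − ∇f(q)) with d > 0, β ≥ 0. Then the total energy H(q,p) = |p|²/2 + f(q) satisfies, along any trajectory, dH/dt = −2d|p|² − pᵀ (∫₀^β (d²f/dx²)(q + τp) dτ) p. In particular, if the Hessian of f satisfies uᵀ(d²f/dx²)(x) u ≥ −C_f|u|² for all u, x with C_f ≥ 0, and 0 ≤ β < 2d/C_f (or β ≥ 0 arbitrary when C_f = 0), then dH/dt ≤ −(2d − βC_f)|p|² ≤ 0. -/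
open scoped RealInnerProductSpace

/-!
Differentiating `H = ‖p‖²/2 + f(q)` along a trajectory gives `⟪p, ṗ + ∇f(q)⟫`, which by the
equation of motion is `−2d‖p‖² − ⟪p, ∇f(q+βp) − ∇f(q)⟫`. The fundamental theorem of calculus
along the segment `τ ↦ q + τp` turns the last inner product into `∫₀^β ⟪p, ∇²f(q+τp) p⟫ dτ`, and
the lower Hessian bound makes this integral at least `−βC_f‖p‖²`.
-/

section

open MeasureTheory intervalIntegral

variable {E F : Type*} [NormedAddCommGroup E] [InnerProductSpace ℝ E]
  [NormedAddCommGroup F] [InnerProductSpace ℝ F]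

theorem ContDiff.gradient [CompleteSpace E] {f : E → ℝ} {m n : WithTop ℕ∞}
    (hf : ContDiff ℝ n f) (hmn : m + 1 ≤ n) : ContDiff ℝ m (gradient f) :=
  (InnerProductSpace.toDual ℝ E).symm.contDiff.comp (hf.fderiv_right hmn)

theorem hasDerivAt_norm_sq_div_two_add_comp [CompleteSpace E] {f : E → ℝ}
    {q p : ℝ → E} {a : E} {t : ℝ} (hf : DifferentiableAt ℝ f (q t))
    (hq : HasDerivAt q (p t) t) (hp : HasDerivAt p a t) :
    HasDerivAt (fun s => ‖p s‖ ^ 2 / 2 + f (q s)) ⟪p t, a + gradient f (q t)⟫ t := by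
  have hpot : HasDerivAt (fun s => f (q s)) ⟪gradient f (q t), p t⟫ t := by
    rw [inner_gradient_left]
    exact hf.hasFDerivAt.comp_hasDerivAt t hq
  refine ((hp.norm_sq.div_const 2).add hpot).congr_deriv ?_
  rw [inner_add_right, real_inner_comm (p t)]
  ring

theorem continuous_inner_fderiv_apply_line {g : E → F} (hg : Continuous (fderiv ℝ g))
    (w : F) (x v : E) : Continuous fun τ : ℝ => ⟪w, fderiv ℝ g (x + τ • v) v⟫ := by
  fun_prop

theorem integral_inner_fderiv_apply_line {g : E → F} (hg : ContDiff ℝ 1 g)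
    (w : F) (x v : E) (β : ℝ) :
    ∫ τ in (0 : ℝ)..β, ⟪w, fderiv ℝ g (x + τ • v) v⟫ = ⟪w, g (x + β • v) - g x⟫ := by
  have hderiv (τ : ℝ) :
      HasDerivAt (fun τ : ℝ => ⟪w, g (x + τ • v)⟫) ⟪w, fderiv ℝ g (x + τ • v) v⟫ τ := by
    have hline : HasDerivAt (fun τ : ℝ => x + τ • v) v τ := by
      simpa using ((hasDerivAt_id τ).smul_const v).const_add x
    have hcomp := (hg.differentiable one_ne_zero _).hasFDerivAt.comp_hasDerivAt τ hline
    simpa using (hasDerivAt_const τ w).inner ℝ hcomp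
  have hint := (continuous_inner_fderiv_apply_line (hg.continuous_fderiv one_ne_zero) w x v)
    |>.intervalIntegrable (μ := volume) 0 β
  rw [integral_eq_sub_of_hasDerivAt (fun τ _ => hderiv τ) hint, inner_sub_right]
  simp

theorem mul_le_integral_inner_fderiv_apply_line {g : E → E} (hg : Continuous (fderiv ℝ g))
    {C β : ℝ} (hβ : 0 ≤ β) (hC : ∀ x u : E, -C * ‖u‖ ^ 2 ≤ ⟪u, fderiv ℝ g x u⟫) (x v : E) :
    β * (-C * ‖v‖ ^ 2) ≤ ∫ τ in (0 : ℝ)..β, ⟪v, fderiv ℝ g (x + τ • v) v⟫ := by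
  have h := integral_mono_on hβ (intervalIntegrable_const (μ := volume))
    ((continuous_inner_fderiv_apply_line hg v x v).intervalIntegrable _ _) (fun τ _ => hC _ v)
  rwa [intervalIntegral.integral_const, sub_zero, smul_eq_mul] at h

end

theorem stmt_6_general (n : ℕ) (f : EuclideanSpace ℝ (Fin n) → ℝ) (hf : ContDiff ℝ 2 f)
    (d β : ℝ) (hβ : 0 ≤ β)
    (q p : ℝ → EuclideanSpace ℝ (Fin n))
    (hq : ∀ t, HasDerivAt q (p t) t)
    (hp : ∀ t, HasDerivAt p
      (-gradient f (q t) - (2 * d) • p t - (gradient f (q t + β • p t) - gradient f (q t))) t) :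
    (∀ t, HasDerivAt (fun s => ‖p s‖ ^ 2 / 2 + f (q s))
      (-(2 * d) * ‖p t‖ ^ 2 -
        ∫ τ in (0:ℝ)..β, ⟪p t, (fderiv ℝ (gradient f) (q t + τ • p t)) (p t)⟫) t) ∧
    (∀ C_f : ℝ, 0 ≤ C_f →
      (∀ (x u : EuclideanSpace ℝ (Fin n)), -C_f * ‖u‖ ^ 2 ≤ ⟪u, (fderiv ℝ (gradient f) x) u⟫) →
      β * C_f ≤ 2 * d →
      ∀ t, (-(2 * d) * ‖p t‖ ^ 2 -
          ∫ τ in (0:ℝ)..β, ⟪p t, (fderiv ℝ (gradient f) (q t + τ • p t)) (p t)⟫)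
        ≤ -(2 * d - β * C_f) * ‖p t‖ ^ 2 ∧ -(2 * d - β * C_f) * ‖p t‖ ^ 2 ≤ 0) := by
  have hgrad : ContDiff ℝ 1 (gradient f) := hf.gradient (by norm_num)
  refine ⟨fun t => ?_, fun C_f _ hHess hβC t => ?_⟩
  · convert hasDerivAt_norm_sq_div_two_add_comp (hf.differentiable two_ne_zero _) (hq t) (hp t)
      using 1
    rw [integral_inner_fderiv_apply_line hgrad]
    simp only [inner_add_right, inner_sub_right, inner_neg_right, inner_smul_right,
      real_inner_self_eq_norm_sq]
    ring
  · have hI := mul_le_integral_inner_fderiv_apply_line (hgrad.continuous_fderiv one_ne_zero) hβ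
      hHess (q t) (p t)
    have hp2 : 0 ≤ ‖p t‖ ^ 2 := by positivity
    constructor <;> nlinarith

/-- Energy decay for the continuous-time momentum dynamics (Example 1): along trajectories of
`q̇ = p`, `ṗ = −∇f(q) − 2dp − (∇f(q+βp) − ∇f(q))`, the total energy `H = ‖p‖²/2 + f(q)`
has derivative `−2d‖p‖² − ⟨p, (∫₀^β ∇²f(q+τp) dτ) p⟩`; and if the Hessian is bounded
below by `−C_f` and `β C_f ≤ 2d` then `dH/dt ≤ −(2d − βC_f)‖p‖² ≤ 0`. -/
theorem stmt_6 (n : ℕ) (f : EuclideanSpace ℝ (Fin n) → ℝ) (hf : ContDiff ℝ 2 f)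
    (d β : ℝ) (hd : 0 < d) (hβ : 0 ≤ β)
    (q p : ℝ → EuclideanSpace ℝ (Fin n))
    (hq : ∀ t, HasDerivAt q (p t) t)
    (hp : ∀ t, HasDerivAt p
      (-gradient f (q t) - (2 * d) • p t - (gradient f (q t + β • p t) - gradient f (q t))) t) :
    (∀ t, HasDerivAt (fun s => ‖p s‖ ^ 2 / 2 + f (q s))
      (-(2 * d) * ‖p t‖ ^ 2 -
        ∫ τ in (0:ℝ)..β, ⟪p t, (fderiv ℝ (gradient f) (q t + τ • p t)) (p t)⟫) t) ∧
    (∀ C_f : ℝ, 0 ≤ C_f →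
      (∀ (x u : EuclideanSpace ℝ (Fin n)), -C_f * ‖u‖ ^ 2 ≤ ⟪u, (fderiv ℝ (gradient f) x) u⟫) →
      β * C_f ≤ 2 * d →
      ∀ t, (-(2 * d) * ‖p t‖ ^ 2 -
          ∫ τ in (0:ℝ)..β, ⟪p t, (fderiv ℝ (gradient f) (q t + τ • p t)) (p t)⟫)
        ≤ -(2 * d - β * C_f) * ‖p t‖ ^ 2 ∧ -(2 * d - β * C_f) * ‖p t‖ ^ 2 ≤ 0) :=
  stmt_6_general n f hf d β hβ q p hq hp
end

section
/- Consider the discrete linear recursion δq_{k+1} = δq_k + T δp_{k+1}, δp_{k+1} = δp_k − T(2d + βh) δp_k − T h δq_k with scalar h > 0, T > 0, d > 0, β ≥ 0. If 0 < T(2d + βh) < 2 − hT² (and hT² < 2), then both eigenvalues of the associated 2×2 update matrix lie strictly inside the unit circle, i.e. the recursion is asymptotically stable. -/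
lemma quad_root_abs_lt_one (s q : ℝ) (z : ℂ)
    (hz : z ^ 2 - (s : ℂ) * z + (q : ℂ) = 0)
    (hA : 0 < 1 - s + q) (hB : 0 < 1 + s + q) (hC : |q| < 1) :
    ‖z‖ < 1 := by
  have hre := congrArg Complex.re hz
  have him := congrArg Complex.im hz
  simp [pow_two, Complex.mul_re, Complex.mul_im] at hre him
  obtain ⟨hq1, hq2⟩ := abs_lt.mp hC
  by_cases hy0 : z.im = 0
  · have hzx : z = (z.re : ℂ) := Complex.ext rfl (by simpa using hy0)
    rw [hzx, Complex.norm_real, Real.norm_eq_abs, abs_lt]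
    rw [hy0] at hre
    simp at hre
    constructor
    · nlinarith [sq_nonneg (z.re - 1), sq_nonneg (z.re + 1)]
    · nlinarith [sq_nonneg (z.re - 1), sq_nonneg (z.re + 1)]
  · have him' : z.im * (2 * z.re - s) = 0 := by linear_combination him
    have hs : s = 2 * z.re := by
      rcases mul_eq_zero.mp him' with h' | h'
      · exact absurd h' hy0
      · linarith
    have hq2' : q = z.re ^ 2 + z.im ^ 2 := by nlinarith [hre]
    have habs : ‖z‖ ^ 2 = z.re ^ 2 + z.im ^ 2 := by
      rw [Complex.sq_norm, Complex.normSq_apply]; ring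
    nlinarith [norm_nonneg z]

/-- Discrete-time stability condition (Example 2 linearization): for the update matrix
`M = [[1 − T²h, T(1 − T(2d+βh))],[−Th, 1 − T(2d+βh)]]` of the recursion
`δq_{k+1} = δq_k + Tδp_{k+1}`, `δp_{k+1} = δp_k − T(2d+βh)δp_k − Thδq_k`,
if `0 < T(2d+βh)` and `T(2d+βh) < 2 − hT²` (so in particular `hT² < 2`), then every
eigenvalue of `M` lies strictly inside the unit circle. -/
theorem stmt_7 (h T d β : ℝ) (hh : 0 < h) (hT : 0 < T) (hd : 0 < d) (hβ : 0 ≤ β)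
    (h1 : 0 < T * (2 * d + β * h)) (h2 : T * (2 * d + β * h) < 2 - h * T ^ 2) :
    ∀ (z : ℂ) (v : Fin 2 → ℂ), v ≠ 0 →
      (Matrix.of ![![((1 - T ^ 2 * h : ℝ) : ℂ), ((T * (1 - T * (2 * d + β * h)) : ℝ) : ℂ)],
                   ![((-(T * h) : ℝ) : ℂ), ((1 - T * (2 * d + β * h) : ℝ) : ℂ)]]).mulVec v
        = z • v →
      ‖z‖ < 1 := by
  intro z v hv hmv
  set a : ℝ := T * (2 * d + β * h) with ha
  set b : ℝ := T ^ 2 * h with hb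
  have hb0 : 0 < b := by positivity
  have hba : a < 2 - b := by rw [ha, hb]; linarith [h2]
  have hbC : (b : ℂ) = (T : ℂ) ^ 2 * (h : ℂ) := by rw [hb]; push_cast; ring
  have eq0 := congrFun hmv 0
  have eq1 := congrFun hmv 1
  simp [Matrix.mulVec, dotProduct, Fin.sum_univ_two, Matrix.cons_val_zero,
    Matrix.cons_val_one, Matrix.head_cons, Matrix.vecHead, Matrix.vecTail] at eq0 eq1
  by_cases hv1 : v 1 = 0
  · exfalso
    have hTh : ((T : ℂ) * h) ≠ 0 :=
      mul_ne_zero (by exact_mod_cast hT.ne') (by exact_mod_cast hh.ne')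
    have hv0 : v 0 = 0 := by
      rw [hv1] at eq1
      push_cast at eq1
      have : -((T : ℂ) * h) * v 0 = 0 := by linear_combination eq1
      simpa [hTh] using this
    apply hv
    funext i
    fin_cases i <;> simpa [hv0, hv1]
  · by_cases hv0 : v 0 = 0
    · rw [hv0] at eq0 eq1
      push_cast at eq0 eq1
      have hz : z = 1 - (a : ℂ) := by
        have : ((1 : ℂ) - a - z) * v 1 = 0 := by linear_combination eq1
        rcases mul_eq_zero.mp this with h' | h'
        · linear_combination -h'
        · exact absurd h' hv1
      have ha1 : (1 : ℂ) - (a : ℂ) = 0 := by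
        have : (T : ℂ) * (1 - (a : ℂ)) * v 1 = 0 := by linear_combination eq0
        rcases mul_eq_zero.mp this with h' | h'
        · rcases mul_eq_zero.mp h' with h'' | h''
          · exact absurd h'' (by exact_mod_cast hT.ne')
          · exact h''
        · exact absurd h' hv1
      rw [hz, ha1]; simp
    · have key : z ^ 2 - ((2 - a - b : ℝ) : ℂ) * z + ((1 - a : ℝ) : ℂ) = 0 := by
        push_cast
        push_cast at eq0 eq1
        have e0 : (z - (1 - (b : ℂ))) * v 0 = (T : ℂ) * (1 - (a : ℂ)) * v 1 := by
          linear_combination -eq0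
        have e1 : (z - (1 - (a : ℂ))) * v 1 = -((T : ℂ) * h) * v 0 := by
          linear_combination -eq1
        have hmul : ((z - (1 - (b : ℂ))) * (z - (1 - (a : ℂ)))
            + ((T : ℂ) ^ 2 * h) * (1 - (a : ℂ))) * (v 0 * v 1) = 0 := by
          linear_combination ((z - (1 - (a : ℂ))) * v 1) * e0
            + ((T : ℂ) * (1 - (a : ℂ)) * v 1) * e1
        rcases mul_eq_zero.mp hmul with h' | h'
        · linear_combination h' + (1 - (a : ℂ)) * hbC
        · exact absurd h' (mul_ne_zero hv0 hv1)
      apply quad_root_abs_lt_one (2 - a - b) (1 - a) z key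
      · linarith
      · linarith
      · rw [abs_lt]; constructor <;> linarith
end
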